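/- Let μ be a non-atomic Radon measure on ℝ and let D be a μ-adic grid on a bounded interval I (each interval recursively split into two closed subintervals of equal μ-measure). Let E be the complement in I of the union of all limit sets of positive length of nested chains of the grid. Then μ(E) = μ(I), and for every nonnegative f ∈ L¹(I, μ), f(x) ≤ M^{D} f(x) for μ-almost every x ∈ E, where M^{D} f(x) = sup_{J ∈ D, J ∋ x} (1/μ(J))∫_J |f| dμ. -/

import Mathlib

open MeasureTheory Set
noncomputable section

/-- A nondegenerate bounded closed interval in `ℝ`. -/
def IsBInterval (I : Set ℝ) : Prop := ∃ a b : ℝ, a < b ∧ I = Set.Icc a b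

/-- The average `(1/μ I) ∫_I f dμ`. -/
def iAvg (μ : Measure ℝ) (f : ℝ → ℝ) (I : Set ℝ) : ℝ :=
  (μ I).toReal⁻¹ * ∫ x in I, f x ∂μ

/-- The uncentered Hardy–Littlewood maximal function with respect to `μ`, over
bounded intervals of positive measure containing `x`. -/
def maximal1 (μ : Measure ℝ) (f : ℝ → ℝ) (x : ℝ) : ℝ :=
  ⨆ I : {I : Set ℝ // IsBInterval I ∧ x ∈ I ∧ μ I ≠ 0},
    iAvg μ (fun y => |f y|) I.1

/-- `w` belongs to the Muckenhoupt class `A_p(μ)` on the line with constant (bound) `c`. -/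
def IsAp1 (μ : Measure ℝ) (w : ℝ → ℝ) (p c : ℝ) : Prop :=
  ∀ I : Set ℝ, IsBInterval I → μ I ≠ 0 →
    iAvg μ w I * (iAvg μ (fun x => w x ^ (1 - p / (p - 1))) I) ^ (p - 1) ≤ c

/-- The Fujii–Wilson `A_∞` condition on the line with constant (bound) `c`:
`∫_I M(w χ_I) dμ ≤ c ∫_I w dμ` for all bounded intervals `I`. -/
def IsFW1 (μ : Measure ℝ) (w : ℝ → ℝ) (c : ℝ) : Prop :=
  ∀ I : Set ℝ, IsBInterval I →
    ∫ x in I, maximal1 μ (I.indicator w) x ∂μ ≤ c * ∫ x in I, w x ∂μ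

/-- A μ-adic grid on an interval `I`: each cell is a closed interval, split into two
children of equal μ-measure. Cells are indexed by lists of booleans (the empty list
is `I` itself, and `b :: s` is a child of `s`; generation = length). -/
structure MuAdicGrid (μ : Measure ℝ) (I : Set ℝ) where
  cell : List Bool → Set ℝ
  top : cell [] = I
  isIcc : ∀ s, ∃ a b : ℝ, a ≤ b ∧ cell s = Set.Icc a b
  union : ∀ s, cell (true :: s) ∪ cell (false :: s) = cell s
  halves : ∀ (b : Bool) (s), μ (cell (b :: s)) = μ (cell s) / 2

/-- The dyadic maximal operator associated with a μ-adic grid. -/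
def gridMaximal (μ : Measure ℝ) {I : Set ℝ} (G : MuAdicGrid μ I) (f : ℝ → ℝ) (x : ℝ) : ℝ :=
  ⨆ s : {s : List Bool // x ∈ G.cell s ∧ μ (G.cell s) ≠ 0},
    iAvg μ (fun y => |f y|) (G.cell s.1)

/-- The limit set of the chain determined by a branch `c : ℕ → Bool`
(the `m`-th term of the chain is the cell indexed by the first `m` values of `c`,
most recent choice first). -/
def limitSet (μ : Measure ℝ) {I : Set ℝ} (G : MuAdicGrid μ I) (c : ℕ → Bool) : Set ℝ :=
  ⋂ m : ℕ, G.cell (List.ofFn fun i : Fin m => c (m - 1 - i))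

/-! A limit set of a chain lies in cells of measure `μ I / 2 ^ m` for every `m` and is an interval,
so it is a μ-null interval. Hence each point `x` of a limit set of positive length satisfies
`μ [[x, r]] = 0` for some rational `r`, and for fixed `r` these points form a μ-null set.

At the remaining points the cells containing `x` shrink to `x`. Replacing a family of cells by its
maximal members gives an a.e.-disjoint family with the same union. This Vitali-type covering gives
the weak-type bound for the cell averages, so `Mᴰ f` is finite a.e. Combined with outer regularity,
it also bounds the set `B` where all cell averages are `≤ t` but `|f| > T > t`:
`T μ(B) ≤ ∫_B |f| ≤ t μ(B)`, so `μ B = 0`. -/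

open Filter Topology Function
open scoped ENNReal

theorem measure_eq_zero_of_measure_Icc_eq_zero {μ : Measure ℝ} [NullSingletonClass μ] {S : Set ℝ}
    (h : ∀ x ∈ S, ∀ y ∈ S, x < y → μ (Icc x y) = 0) : μ S = 0 := by
  have hcover : S ⊆ (⋃ (p : ℚ) (q : ℚ) (_ : μ (Icc (p : ℝ) q) = 0), Icc (p : ℝ) q) ∪
      ({x | IsLeast S x} ∪ {x | IsGreatest S x}) := by
    intro x hx
    by_cases hl : IsLeast S x
    · exact Or.inr (Or.inl hl)
    by_cases hg : IsGreatest S x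
    · exact Or.inr (Or.inr hg)
    obtain ⟨y, hy, hyx⟩ : ∃ y ∈ S, y < x := by simpa [IsLeast, hx, lowerBounds] using hl
    obtain ⟨z, hz, hxz⟩ : ∃ z ∈ S, x < z := by simpa [IsGreatest, hx, upperBounds] using hg
    obtain ⟨p, hyp, hpx⟩ := exists_rat_btwn hyx
    obtain ⟨q, hxq, hqz⟩ := exists_rat_btwn hxz
    have hpq : μ (Icc (p : ℝ) q) = 0 :=
      measure_mono_null (Icc_subset_Icc hyp.le hqz.le) (h y hy z hz (hyx.trans hxz))
    exact Or.inl (mem_iUnion₂.2 ⟨p, q, mem_iUnion.2 ⟨hpq, hpx.le, hxq.le⟩⟩)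
  refine measure_mono_null hcover (measure_union_null ?_ (measure_union_null ?_ ?_))
  · exact measure_iUnion_null fun p => measure_iUnion_null fun q => measure_iUnion_null id
  · exact Set.Subsingleton.measure_zero (fun x hx y hy => hx.unique hy) μ
  · exact Set.Subsingleton.measure_zero (fun x hx y hy => hx.unique hy) μ

theorem measure_setOf_measure_uIcc_eq_zero {μ : Measure ℝ} [NullSingletonClass μ] (r : ℝ) :
    μ {x | μ (uIcc x r) = 0} = 0 :=
  measure_eq_zero_of_measure_Icc_eq_zero fun x hx y hy hxy => by
    rw [← uIcc_of_le hxy.le]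
    exact measure_mono_null uIcc_subset_uIcc_union_uIcc
      (measure_union_null hx (uIcc_comm r y ▸ hy))

theorem le_mul_measure_of_forall_isOpen {X : Type*} [TopologicalSpace X] [MeasurableSpace X]
    {μ : Measure X} [μ.OuterRegular] {B : Set X} {a c : ℝ≥0∞} (hc : c ≠ ∞)
    (h : ∀ U, B ⊆ U → IsOpen U → a ≤ c * μ U) : a ≤ c * μ B := by
  rcases eq_or_ne c 0 with rfl | hc0
  · simpa using h univ (subset_univ B) isOpen_univ
  refine le_of_forall_gt fun r hr => ?_
  obtain ⟨U, hBU, hU, hμU⟩ := B.exists_isOpen_lt_of_lt (r / c)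
    (by rwa [ENNReal.lt_div_iff_mul_lt (Or.inl hc0) (Or.inl hc), mul_comm])
  refine (h U hBU hU).trans_lt ?_
  rwa [mul_comm, ← ENNReal.lt_div_iff_mul_lt (Or.inl hc0) (Or.inl hc)]

theorem iAvg_abs_nonneg (μ : Measure ℝ) (f : ℝ → ℝ) (A : Set ℝ) :
    0 ≤ iAvg μ (fun y => |f y|) A :=
  mul_nonneg (inv_nonneg.2 ENNReal.toReal_nonneg) (integral_nonneg fun _ => abs_nonneg _)

theorem setLIntegral_enorm_eq_ofReal_iAvg_mul {μ : Measure ℝ} {f : ℝ → ℝ} {A : Set ℝ}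
    (hA : μ A ≠ ∞) (hf : IntegrableOn f A μ) :
    ∫⁻ x in A, ‖f x‖ₑ ∂μ = ENNReal.ofReal (iAvg μ (fun y => |f y|) A) * μ A := by
  rcases eq_or_ne (μ A) 0 with h0 | h0
  · simp [Measure.restrict_eq_zero.2 h0, h0]
  have hpos : 0 < (μ A).toReal := ENNReal.toReal_pos h0 hA
  calc ∫⁻ x in A, ‖f x‖ₑ ∂μ = ENNReal.ofReal (∫ x in A, ‖f x‖ ∂μ) :=
        (ofReal_integral_norm_eq_lintegral_enorm hf).symm
    _ = ENNReal.ofReal (iAvg μ (fun y => |f y|) A * (μ A).toReal) := by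
        rw [iAvg, mul_comm, ← mul_assoc, mul_inv_cancel₀ hpos.ne', one_mul]
        simp only [Real.norm_eq_abs]
    _ = ENNReal.ofReal (iAvg μ (fun y => |f y|) A) * μ A := by
        rw [ENNReal.ofReal_mul (iAvg_abs_nonneg μ f A), ENNReal.ofReal_toReal hA]

/-- `limitSet μ G c` is `⋂ m, G.cell (chainIndex c m)` by definition. -/
def chainIndex (c : ℕ → Bool) (m : ℕ) : List Bool :=
  List.ofFn fun i : Fin m => c (m - 1 - i)

theorem chainIndex_succ (c : ℕ → Bool) (m : ℕ) : chainIndex c (m + 1) = c m :: chainIndex c m := by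
  simp only [chainIndex, List.ofFn_succ, Fin.val_zero, Fin.val_succ, Nat.add_sub_cancel,
    Nat.sub_zero]
  congr 2
  funext i
  congr 1
  omega

namespace MuAdicGrid

variable {μ : Measure ℝ} {I : Set ℝ} (G : MuAdicGrid μ I)

theorem cell_cons_subset (b : Bool) (s : List Bool) : G.cell (b :: s) ⊆ G.cell s := by
  rw [← G.union s]
  cases b
  · exact subset_union_right
  · exact subset_union_left

theorem cell_subset_of_suffix {s t : List Bool} (h : t <:+ s) : G.cell s ⊆ G.cell t := by
  obtain ⟨p, rfl⟩ := h
  induction p with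
  | nil => exact subset_rfl
  | cons a p ih => exact (G.cell_cons_subset a _).trans ih

theorem cell_subset (s : List Bool) : G.cell s ⊆ I :=
  (G.cell_subset_of_suffix List.nil_suffix).trans G.top.subset

theorem isCompact_cell (s : List Bool) : IsCompact (G.cell s) := by
  obtain ⟨a, b, -, h⟩ := G.isIcc s
  exact h ▸ isCompact_Icc

theorem measurableSet_cell (s : List Bool) : MeasurableSet (G.cell s) :=
  (G.isCompact_cell s).isClosed.measurableSet

theorem ordConnected_cell (s : List Bool) : (G.cell s).OrdConnected := by
  obtain ⟨a, b, -, h⟩ := G.isIcc s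
  exact h ▸ ordConnected_Icc

theorem measure_cell (s : List Bool) : μ (G.cell s) = μ I * 2⁻¹ ^ s.length := by
  induction s with
  | nil => simp [G.top]
  | cons b s ih => rw [G.halves, ih, List.length_cons, div_eq_mul_inv, pow_succ, mul_assoc]

theorem antitone_cell_chainIndex (c : ℕ → Bool) : Antitone fun m => G.cell (chainIndex c m) :=
  antitone_nat_of_succ_le fun m => by
    simp only [chainIndex_succ]
    exact G.cell_cons_subset _ _

theorem ordConnected_limitSet (c : ℕ → Bool) : (limitSet μ G c).OrdConnected :=
  ordConnected_iInter fun _ => G.ordConnected_cell _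

open Classical in
def address (x : ℝ) : ℕ → List Bool
  | 0 => []
  | n + 1 => decide (x ∈ G.cell (true :: address x n)) :: address x n

theorem mem_cell_address {x : ℝ} (hx : x ∈ I) (n : ℕ) : x ∈ G.cell (G.address x n) := by
  induction n with
  | zero => simpa [address, G.top] using hx
  | succ n ih =>
    by_cases h : x ∈ G.cell (true :: G.address x n)
    · simp [address, h]
    · rw [← G.union] at ih
      simpa [address, h] using ih.resolve_left h

theorem exists_mem_limitSet {x : ℝ} (hx : x ∈ I) : ∃ c, x ∈ limitSet μ G c := by
  classical
  let c (n : ℕ) : Bool := decide (x ∈ G.cell (true :: G.address x n))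
  have hc : ∀ n, G.address x n = chainIndex c n := by
    intro n
    induction n with
    | zero => rfl
    | succ n ih =>
      rw [chainIndex_succ, ← ih]
      rfl
  refine ⟨c, mem_iInter.2 fun n => ?_⟩
  show x ∈ G.cell (chainIndex c n)
  rw [← hc]
  exact G.mem_cell_address hx n

def CellsShrinkTo (x : ℝ) : Prop :=
  ∀ U ∈ 𝓝 x, ∃ s, x ∈ G.cell s ∧ G.cell s ⊆ U

theorem cellsShrinkTo_of_forall_subsingleton {x : ℝ} (hx : x ∈ I)
    (hL : ∀ c, x ∈ limitSet μ G c → (limitSet μ G c).Subsingleton) : G.CellsShrinkTo x := by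
  intro U hU
  obtain ⟨c, hc⟩ := G.exists_mem_limitSet hx
  obtain ⟨m, hm⟩ := exists_subset_nhds_of_isCompact' (G.antitone_cell_chainIndex c).directed_ge
    (fun _ => G.isCompact_cell _) (fun _ => (G.isCompact_cell _).isClosed)
    (fun y hy => by rwa [hL c hc hy hc])
  exact ⟨chainIndex c m, mem_iInter.1 hc m, hm⟩

section LocallyFinite

variable [IsLocallyFiniteMeasure μ]

theorem measure_cell_ne_top (s : List Bool) : μ (G.cell s) ≠ ∞ :=
  (G.isCompact_cell s).measure_lt_top.ne

theorem measure_ne_top (G : MuAdicGrid μ I) : μ I ≠ ∞ := by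
  simpa only [G.top] using G.measure_cell_ne_top []

theorem aedisjoint_cell_true_false (s : List Bool) :
    AEDisjoint μ (G.cell (true :: s)) (G.cell (false :: s)) := by
  have h := measure_union_add_inter (μ := μ) (G.cell (true :: s))
    (G.measurableSet_cell (false :: s))
  rw [G.union, G.halves, G.halves, ENNReal.add_halves] at h
  exact (ENNReal.add_right_inj (G.measure_cell_ne_top s)).1 (h.trans (add_zero _).symm)

theorem aedisjoint_cell_of_length_eq :
    ∀ {s t : List Bool}, s.length = t.length → s ≠ t → AEDisjoint μ (G.cell s) (G.cell t)
  | [], [], _, hne => (hne rfl).elim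
  | [], _ :: _, hlen, _ => by simp at hlen
  | _ :: _, [], hlen, _ => by simp at hlen
  | a :: s, b :: t, hlen, hne => by
    by_cases hst : s = t
    · subst hst
      cases a <;> cases b
      · exact (hne rfl).elim
      · exact (G.aedisjoint_cell_true_false s).symm
      · exact G.aedisjoint_cell_true_false s
      · exact (hne rfl).elim
    · exact (aedisjoint_cell_of_length_eq (by simpa using hlen) hst).mono
        (G.cell_cons_subset a s) (G.cell_cons_subset b t)

theorem aedisjoint_cell_of_not_suffix {s t : List Bool} (hst : ¬ s <:+ t) (hts : ¬ t <:+ s) :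
    AEDisjoint μ (G.cell s) (G.cell t) := by
  wlog hle : s.length ≤ t.length generalizing s t
  · exact (this hts hst (le_of_not_ge hle)).symm
  have hsuf : t.drop (t.length - s.length) <:+ t := List.drop_suffix _ _
  have hlen : s.length = (t.drop (t.length - s.length)).length := by
    rw [List.length_drop]
    omega
  exact (G.aedisjoint_cell_of_length_eq hlen fun h => hst (h ▸ hsuf)).mono subset_rfl
    (G.cell_subset_of_suffix hsuf)

theorem exists_pairwise_aedisjoint_biUnion_cell_eq (𝒮 : Set (List Bool)) :
    ∃ M ⊆ 𝒮, M.Pairwise (AEDisjoint μ on G.cell) ∧ ⋃ s ∈ M, G.cell s = ⋃ s ∈ 𝒮, G.cell s := by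
  refine ⟨{s ∈ 𝒮 | ∀ t ∈ 𝒮, t <:+ s → t = s}, fun s hs => hs.1, ?_, ?_⟩
  · intro s hs t ht hne
    exact G.aedisjoint_cell_of_not_suffix (fun h => hne (ht.2 s hs.1 h))
      (fun h => hne (hs.2 t ht.1 h).symm)
  refine (biUnion_subset_biUnion_left fun s hs => hs.1).antisymm (iUnion₂_subset fun s hs => ?_)
  -- a shortest suffix of `s` lying in `𝒮` indexes a maximal cell containing `G.cell s`
  obtain ⟨t, ⟨ht, hts⟩, hmin⟩ :=
    (measure List.length).wf.has_min {t | t ∈ 𝒮 ∧ t <:+ s} ⟨s, hs, List.suffix_refl s⟩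
  refine (G.cell_subset_of_suffix hts).trans (subset_biUnion_of_mem (u := G.cell) ⟨ht, ?_⟩)
  exact fun u hu hut => hut.eq_of_length
    (le_antisymm hut.length_le (not_lt.1 (hmin u ⟨hu, hut.trans hts⟩)))

theorem mul_measure_biUnion_cell_le {𝒮 : Set (List Bool)} {F : ℝ → ℝ≥0∞} {c : ℝ≥0∞}
    (h : ∀ s ∈ 𝒮, c * μ (G.cell s) ≤ ∫⁻ x in G.cell s, F x ∂μ) :
    c * μ (⋃ s ∈ 𝒮, G.cell s) ≤ ∫⁻ x in ⋃ s ∈ 𝒮, G.cell s, F x ∂μ := by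
  obtain ⟨M, hM𝒮, hM, hunion⟩ := G.exists_pairwise_aedisjoint_biUnion_cell_eq 𝒮
  have hnull : ∀ s ∈ M, NullMeasurableSet (G.cell s) μ :=
    fun s _ => (G.measurableSet_cell s).nullMeasurableSet
  rw [← hunion, measure_biUnion₀ M.to_countable hM hnull,
    lintegral_biUnion₀ M.to_countable hnull hM, ← ENNReal.tsum_mul_left]
  exact ENNReal.tsum_le_tsum fun s => h s (hM𝒮 s.2)

theorem setLIntegral_biUnion_cell_le {𝒮 : Set (List Bool)} {F : ℝ → ℝ≥0∞} {c : ℝ≥0∞}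
    (h : ∀ s ∈ 𝒮, ∫⁻ x in G.cell s, F x ∂μ ≤ c * μ (G.cell s)) :
    ∫⁻ x in ⋃ s ∈ 𝒮, G.cell s, F x ∂μ ≤ c * μ (⋃ s ∈ 𝒮, G.cell s) := by
  obtain ⟨M, hM𝒮, hM, hunion⟩ := G.exists_pairwise_aedisjoint_biUnion_cell_eq 𝒮
  have hnull : ∀ s ∈ M, NullMeasurableSet (G.cell s) μ :=
    fun s _ => (G.measurableSet_cell s).nullMeasurableSet
  rw [← hunion, measure_biUnion₀ M.to_countable hM hnull,
    lintegral_biUnion₀ M.to_countable hnull hM, ← ENNReal.tsum_mul_left]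
  exact ENNReal.tsum_le_tsum fun s => h s (hM𝒮 s.2)

theorem measure_limitSet_eq_zero (c : ℕ → Bool) : μ (limitSet μ G c) = 0 := by
  have htend : Tendsto (fun m : ℕ => μ I * 2⁻¹ ^ m) atTop (𝓝 0) := by
    simpa using ENNReal.Tendsto.const_mul
      (ENNReal.tendsto_pow_atTop_nhds_zero_of_lt_one (by norm_num)) (Or.inr G.measure_ne_top)
  refine le_antisymm (ge_of_tendsto' htend fun m => ?_) bot_le
  calc μ (limitSet μ G c) ≤ μ (G.cell (chainIndex c m)) := measure_mono (iInter_subset _ m)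
    _ = μ I * 2⁻¹ ^ m := by rw [G.measure_cell, chainIndex, List.length_ofFn]

theorem measure_biUnion_nontrivial_limitSet_eq_zero [NullSingletonClass μ] :
    μ (⋃ c ∈ {c : ℕ → Bool | ¬ (limitSet μ G c).Subsingleton}, limitSet μ G c) = 0 := by
  refine measure_mono_null (iUnion₂_subset fun c hc x hx => ?_)
    (measure_iUnion_null fun r : ℚ => measure_setOf_measure_uIcc_eq_zero (μ := μ) r)
  obtain ⟨y, hy, hyx⟩ := (not_subsingleton_iff.1 hc).exists_ne x
  obtain ⟨r, hr⟩ : ∃ r : ℚ, (r : ℝ) ∈ uIcc x y := by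
    obtain ⟨r, h₁, h₂⟩ := exists_rat_btwn (min_lt_max.2 hyx.symm)
    exact ⟨r, h₁.le, h₂.le⟩
  have hxy : μ (uIcc x y) = 0 := measure_mono_null
    ((G.ordConnected_limitSet c).uIcc_subset hx hy) (G.measure_limitSet_eq_zero c)
  exact mem_iUnion.2 ⟨r, measure_mono_null (uIcc_subset_uIcc_left hr) hxy⟩

theorem ae_bddAbove_iAvg {f : ℝ → ℝ} (hf : IntegrableOn f I μ) :
    ∀ᵐ x ∂μ, BddAbove (range fun s : {s // x ∈ G.cell s ∧ μ (G.cell s) ≠ 0} =>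
      iAvg μ (fun y => |f y|) (G.cell s)) := by
  rw [ae_iff]
  set N := {x | ¬ BddAbove (range fun s : {s // x ∈ G.cell s ∧ μ (G.cell s) ≠ 0} =>
      iAvg μ (fun y => |f y|) (G.cell s))}
  by_contra hN
  obtain ⟨n, hn⟩ := ENNReal.exists_nat_mul_gt hN hf.2.ne
  set 𝒮 := {s | (n : ℝ≥0∞) * μ (G.cell s) ≤ ∫⁻ x in G.cell s, ‖f x‖ₑ ∂μ}
  have hcover : N ⊆ ⋃ s ∈ 𝒮, G.cell s := by
    intro x hx
    obtain ⟨_, ⟨⟨s, hxs, _⟩, rfl⟩, hlt⟩ := not_bddAbove_iff.1 hx n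
    refine mem_biUnion ?_ hxs
    rw [mem_ofPred_eq, setLIntegral_enorm_eq_ofReal_iAvg_mul (G.measure_cell_ne_top s)
      (hf.mono_set (G.cell_subset s)), ← ENNReal.ofReal_natCast]
    gcongr
  refine hn.not_ge ?_
  calc (n : ℝ≥0∞) * μ N ≤ n * μ (⋃ s ∈ 𝒮, G.cell s) := by gcongr
    _ ≤ ∫⁻ x in ⋃ s ∈ 𝒮, G.cell s, ‖f x‖ₑ ∂μ := G.mul_measure_biUnion_cell_le fun s hs => hs
    _ ≤ ∫⁻ x in I, ‖f x‖ₑ ∂μ := lintegral_mono_set (iUnion₂_subset fun s _ => G.cell_subset s)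

theorem setLIntegral_enorm_le_of_forall_iAvg_le {B : Set ℝ} (hB : ∀ x ∈ B, G.CellsShrinkTo x)
    {f : ℝ → ℝ} (hf : IntegrableOn f I μ) {t : ℝ}
    (ht : ∀ x ∈ B, ∀ s, x ∈ G.cell s → μ (G.cell s) ≠ 0 → iAvg μ (fun y => |f y|) (G.cell s) ≤ t) :
    ∫⁻ x in B, ‖f x‖ₑ ∂μ ≤ ENNReal.ofReal t * μ B := by
  refine le_mul_measure_of_forall_isOpen ENNReal.ofReal_ne_top fun U hBU hU => ?_
  set 𝒮 := {s | G.cell s ⊆ U ∧ ∫⁻ x in G.cell s, ‖f x‖ₑ ∂μ ≤ ENNReal.ofReal t * μ (G.cell s)}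
  have hcover : B ⊆ ⋃ s ∈ 𝒮, G.cell s := by
    intro x hx
    obtain ⟨s, hxs, hsU⟩ := hB x hx U (hU.mem_nhds (hBU hx))
    refine mem_biUnion ⟨hsU, ?_⟩ hxs
    rw [setLIntegral_enorm_eq_ofReal_iAvg_mul (G.measure_cell_ne_top s)
      (hf.mono_set (G.cell_subset s))]
    rcases eq_or_ne (μ (G.cell s)) 0 with h0 | h0
    · simp [h0]
    · gcongr
      exact ht x hx s hxs h0
  calc ∫⁻ x in B, ‖f x‖ₑ ∂μ ≤ ∫⁻ x in ⋃ s ∈ 𝒮, G.cell s, ‖f x‖ₑ ∂μ := lintegral_mono_set hcover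
    _ ≤ ENNReal.ofReal t * μ (⋃ s ∈ 𝒮, G.cell s) := G.setLIntegral_biUnion_cell_le fun s hs => hs.2
    _ ≤ ENNReal.ofReal t * μ U := by
      gcongr
      exact iUnion₂_subset fun s hs => hs.1

theorem ae_abs_le_of_forall_iAvg_le {A : Set ℝ} (hA : ∀ x ∈ A, G.CellsShrinkTo x)
    {f : ℝ → ℝ} (hf : IntegrableOn f I μ) {t T : ℝ} (htT : t < T) (hT : 0 < T) :
    ∀ᵐ x ∂μ, x ∈ A → (∀ s, x ∈ G.cell s → μ (G.cell s) ≠ 0 →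
      iAvg μ (fun y => |f y|) (G.cell s) ≤ t) → |f x| ≤ T := by
  simp only [ae_iff, Classical.not_imp, not_le]
  set B := {x | x ∈ A ∧ (∀ s, x ∈ G.cell s → μ (G.cell s) ≠ 0 →
      iAvg μ (fun y => |f y|) (G.cell s) ≤ t) ∧ T < |f x|}
  have hBI : B ⊆ I := fun x hx => by
    obtain ⟨s, hxs, -⟩ := hA x hx.1 univ univ_mem
    exact G.cell_subset s hxs
  have hlower : ENNReal.ofReal T * μ B ≤ ∫⁻ x in B, ‖f x‖ₑ ∂μ := by
    rw [← setLIntegral_const]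
    refine setLIntegral_mono_ae (hf.mono_set hBI).aemeasurable.enorm (ae_of_all _ fun x hx => ?_)
    rw [Real.enorm_eq_ofReal_abs]
    exact ENNReal.ofReal_le_ofReal hx.2.2.le
  have hupper : ∫⁻ x in B, ‖f x‖ₑ ∂μ ≤ ENNReal.ofReal t * μ B :=
    G.setLIntegral_enorm_le_of_forall_iAvg_le (fun x hx => hA x hx.1) hf fun x hx => hx.2.1
  by_contra h0
  have hle := hlower.trans hupper
  rw [ENNReal.mul_le_mul_iff_left h0 ((measure_mono hBI).trans_lt G.measure_ne_top.lt_top).ne]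
    at hle
  exact ((ENNReal.ofReal_lt_ofReal_iff hT).2 htT).not_ge hle

theorem ae_abs_le_gridMaximal {A : Set ℝ} (hA : ∀ x ∈ A, G.CellsShrinkTo x)
    {f : ℝ → ℝ} (hf : IntegrableOn f I μ) :
    ∀ᵐ x ∂μ, x ∈ A → |f x| ≤ gridMaximal μ G f x := by
  have hbad : ∀ᵐ x ∂μ, ∀ t T : ℚ, (t : ℝ) < T → (0 : ℝ) < T → x ∈ A →
      (∀ s, x ∈ G.cell s → μ (G.cell s) ≠ 0 → iAvg μ (fun y => |f y|) (G.cell s) ≤ t) →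
      |f x| ≤ T := by
    simp only [ae_all_iff, eventually_imp_distrib_left]
    exact fun t T htT hT => G.ae_abs_le_of_forall_iAvg_le hA hf htT hT
  filter_upwards [G.ae_bddAbove_iAvg hf, hbad] with x hbdd hx hxA
  by_contra! hlt
  have h0 : 0 ≤ gridMaximal μ G f x := Real.iSup_nonneg fun s => iAvg_abs_nonneg μ f _
  obtain ⟨t, ht₁, ht₂⟩ := exists_rat_btwn hlt
  obtain ⟨T, hT₁, hT₂⟩ := exists_rat_btwn ht₂
  exact hT₂.not_ge (hx t T hT₁ (by linarith) hxA fun s hxs hs0 =>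
    (le_ciSup hbdd ⟨s, hxs, hs0⟩).trans ht₁.le)

end LocallyFinite

end MuAdicGrid

theorem grid_differentiation_general (μ : Measure ℝ) [NullSingletonClass μ] [IsLocallyFiniteMeasure μ]
    (I : Set ℝ)
    (G : MuAdicGrid μ I)
    (E : Set ℝ)
    (hE : E = I \ ⋃ c ∈ {c : ℕ → Bool | ¬ (limitSet μ G c).Subsingleton}, limitSet μ G c)
    (f : ℝ → ℝ) (hfi : IntegrableOn f I μ) :
    μ E = μ I ∧ ∀ᵐ x ∂μ, x ∈ E → f x ≤ gridMaximal μ G f x := by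
  refine ⟨hE ▸ measure_sdiff_null G.measure_biUnion_nontrivial_limitSet_eq_zero, ?_⟩
  have hshrink : ∀ x ∈ E, G.CellsShrinkTo x := by
    rw [hE]
    exact fun x hx => G.cellsShrinkTo_of_forall_subsingleton hx.1
      fun c hxc => by_contra fun h => hx.2 (mem_biUnion h hxc)
  filter_upwards [G.ae_abs_le_gridMaximal hshrink hfi] with x hx hxE
  exact (le_abs_self _).trans (hx hxE)

/-- After removing the (μ-null) union of all limit sets of positive length of chains
of the grid, the grid differentiates `L¹`: `f ≤ Mᴰ f` μ-a.e. on the remaining set. -/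
theorem grid_differentiation (μ : Measure ℝ) [NullSingletonClass μ] [IsLocallyFiniteMeasure μ]
    (I : Set ℝ) (hI : IsBInterval I) (hμI : μ I ≠ 0)
    (G : MuAdicGrid μ I)
    (E : Set ℝ)
    (hE : E = I \ ⋃ c ∈ {c : ℕ → Bool | ¬ (limitSet μ G c).Subsingleton}, limitSet μ G c)
    (f : ℝ → ℝ) (hf0 : ∀ x, 0 ≤ f x) (hfm : Measurable f) (hfi : IntegrableOn f I μ) :
    μ E = μ I ∧ ∀ᵐ x ∂μ, x ∈ E → f x ≤ gridMaximal μ G f x :=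
  grid_differentiation_general μ I G E hE f hfi
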